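/- arXiv:0809.3063 — 2 statements merged into one kernel-verified Lean document; each statement's English description precedes it below -/
import Mathlib

section
/- Let R be one of the fields ℚ, ℝ, or ℂ and let H(t) = 1 + r_1 t + r_2 t² + ⋯ ∈ R[[t]] be 1-algebraically rigid. Then r_{2k+1} = 0 for all k ≥ 1; equivalently, the power series H(t) − r_1 t is even. -/
noncomputable section

namespace RigidGenus

variable {R : Type*} [Field R]

/-- Termwise substitution `t ↦ w·t` on Laurent series: the coefficient of `t^k`
is multiplied by `w^k`. -/
def zscale (w : R) (f : LaurentSeries R) : LaurentSeries R where
  coeff k := w ^ k * f.coeff k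
  isPWO_support' := f.isPWO_support'.mono (fun k hk => by
    simp only [Function.mem_support, ne_eq] at hk ⊢
    exact fun h => hk (by rw [h, mul_zero]))

/-- Termwise derivative of a Laurent series: `(∑ f_k t^k)' = ∑ k f_k t^(k-1)`. -/
def lderiv (f : LaurentSeries R) : LaurentSeries R where
  coeff k := ((k + 1 : ℤ) : R) * f.coeff (k + 1)
  isPWO_support' := by
    have himg : ((fun k : ℤ => k - 1) '' (Function.support f.coeff)).IsPWO :=
      f.isPWO_support'.image_of_monotone (fun a b h => sub_le_sub_right h 1)
    refine himg.mono (fun k hk => ?_)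
    simp only [Function.mem_support, ne_eq] at hk
    exact ⟨k + 1, fun h => hk (by rw [h, mul_zero]), by ring⟩

/-- `F_H = H(t)/t`, as a formal Laurent series. -/
def FH (H : PowerSeries R) : LaurentSeries R :=
  HahnSeries.single (-1 : ℤ) (1 : R) * HahnSeries.ofPowerSeries ℤ R H

/-- `S_H(w_0,…,w_n;t) = ∑_i ∏_{j ≠ i} F_H((w_j - w_i) t)`. -/
def SH (H : PowerSeries R) {n : ℕ} (w : Fin (n + 1) → ℤ) : LaurentSeries R :=
  ∑ i : Fin (n + 1), ∏ j ∈ Finset.univ.erase i, zscale ((w j - w i : ℤ) : R) (FH H)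

/-- `H` is `n`-algebraically rigid: for all `1 ≤ m ≤ n` and pairwise distinct
integers `w_0, …, w_m`, the Laurent series `S_H(w_0,…,w_m;t)` is constant. -/
def AlgRigid (H : PowerSeries R) (n : ℕ) : Prop :=
  ∀ m : ℕ, 1 ≤ m → m ≤ n → ∀ w : Fin (m + 1) → ℤ, Function.Injective w →
    ∀ k : ℤ, k ≠ 0 → (SH H w).coeff k = 0

/-- The formal exponential series `exp (a t)`. -/
def expS (a : R) : PowerSeries R := PowerSeries.mk fun n => a ^ n / n.factorial

/-- The formal sine series `sin (a t)`. -/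
def sinS (a : R) : PowerSeries R :=
  PowerSeries.mk fun n => if n % 2 = 1 then (-1 : R) ^ (n / 2) * a ^ n / n.factorial else 0

/-- The formal cosine series `cos (a t)`. -/
def cosS (a : R) : PowerSeries R :=
  PowerSeries.mk fun n => if n % 2 = 0 then (-1 : R) ^ (n / 2) * a ^ n / n.factorial else 0

/-- `H = D_{a,b}`, the generalized Todd series `t(a·coth(at)+b)`: for `a ≠ 0` it is
characterized by `D_{a,b}(t)·(e^{at} - e^{-at}) = t·(a(e^{at}+e^{-at}) + b(e^{at}-e^{-at}))`,
and `D_{0,b}(t) = 1 + bt`. -/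
def IsDab (a b : R) (H : PowerSeries R) : Prop :=
  (a ≠ 0 ∧ H * (expS a - expS (-a)) =
      PowerSeries.X * (PowerSeries.C a * (expS a + expS (-a)) +
        PowerSeries.C b * (expS a - expS (-a)))) ∨
  (a = 0 ∧ H = 1 + PowerSeries.C b * PowerSeries.X)

/-- `H = G_{a,b}`, the series `t(a·cot(at)+b)`: for `a ≠ 0` it is characterized by
`G_{a,b}(t)·sin(at) = t·(a·cos(at) + b·sin(at))`, and `G_{0,b}(t) = 1 + bt`. -/
def IsGab (a b : R) (H : PowerSeries R) : Prop :=
  (a ≠ 0 ∧ H * sinS a =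
      PowerSeries.X * (PowerSeries.C a * cosS a + PowerSeries.C b * sinS a)) ∨
  (a = 0 ∧ H = 1 + PowerSeries.C b * PowerSeries.X)

lemma coeff_zscale (w : R) (f : LaurentSeries R) (k : ℤ) :
    (zscale w f).coeff k = w ^ k * f.coeff k := rfl

lemma coeff_FH_natCast (H : PowerSeries R) (n : ℕ) :
    (FH H).coeff n = PowerSeries.coeff (n + 1) H := by
  rw [FH, mul_comm, show (n : ℤ) = ((n + 1 : ℕ) : ℤ) + -1 by push_cast; ring,
    HahnSeries.coeff_mul_single_add, mul_one, HahnSeries.ofPowerSeries_apply_coeff]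

lemma SH_pair (H : PowerSeries R) (a b : ℤ) :
    SH H ![a, b] = zscale ((b - a : ℤ) : R) (FH H) + zscale ((a - b : ℤ) : R) (FH H) := by
  rw [SH, Fin.sum_univ_two, show Finset.univ.erase (0 : Fin 2) = {1} by decide,
    show Finset.univ.erase (1 : Fin 2) = {0} by decide, Finset.prod_singleton,
    Finset.prod_singleton]
  rfl

lemma coeff_SH_zero_one (H : PowerSeries R) (n : ℕ) :
    (SH H ![0, 1]).coeff n = (1 + (-1) ^ n) * PowerSeries.coeff (n + 1) H := by
  rw [SH_pair, HahnSeries.coeff_add, coeff_zscale, coeff_zscale, coeff_FH_natCast, zpow_natCast,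
    zpow_natCast]
  push_cast
  ring

theorem odd_coeff_eq_zero_of_algRigid_one_general {R : Type*} [Field R] [CharZero R]
    (H : PowerSeries R)
    (hrig : AlgRigid H 1) :
    ∀ k : ℕ, 1 ≤ k → PowerSeries.coeff (2 * k + 1) H = 0 := by
  intro k hk
  have hw : Function.Injective (![0, 1] : Fin 2 → ℤ) := by
    intro a b hab
    fin_cases a <;> fin_cases b <;> simp_all
  have h := hrig 1 le_rfl le_rfl ![0, 1] hw (2 * k : ℕ) (by positivity)
  rw [coeff_SH_zero_one, pow_mul, neg_one_sq, one_pow] at h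
  simpa using h

/-- if `H = 1 + r₁t + ⋯` is 1-algebraically rigid, then `r_{2k+1} = 0`
for all `k ≥ 1`, i.e. `H(t) − r₁t` is even. -/
theorem odd_coeff_eq_zero_of_algRigid_one {R : Type*} [Field R] [CharZero R]
    (H : PowerSeries R) (hH : PowerSeries.constantCoeff H = 1)
    (hrig : AlgRigid H 1) :
    ∀ k : ℕ, 1 ≤ k → PowerSeries.coeff (2 * k + 1) H = 0 :=
  odd_coeff_eq_zero_of_algRigid_one_general H hrig
end RigidGenus
end
end

section
/- For a, b ∈ ℂ, the formal Laurent series F(t) = D_{a,b}(t)/t satisfies F(t) + F(−t) = 2b and the Riccati equation F′(t) = −F(t)² + 2b·F(t) + (a² − b²), where F(−t) denotes the Laurent series whose coefficient of t^k is (−1)^k times that of F, and F′ is the termwise derivative. -/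
noncomputable section

namespace RigidGenus

variable {R : Type*} [Field R]

/-!
With `E = e^{at} - e^{-at}` and `S = e^{at} + e^{-at}` one has `E' = aS`, `S' = aE`,
`E(-t) = -E` and `S(-t) = S`. Substituting `t ↦ -t` in, resp. differentiating, the defining
relation `D·E = t(aS + bE)` and cancelling `E` gives the power-series identities
`D(t) - D(-t) = 2bt` and `tD' = D - D² + 2btD + (a² - b²)t²`. Since `t·F = D` and
`t²F' = tD' - D`, cancelling `t` in the field of Laurent series turns these into the two claims.
-/

open PowerSeries
open scoped LaurentSeries

theorem rescale_C {A : Type*} [CommSemiring A] (w c : A) : rescale w (C c) = C c := by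
  ext n
  rcases n with _ | n <;> simp [coeff_rescale, coeff_C]

section HyperbolicPair

variable {A : Type*} [CommRing A] [IsDomain A] {a b : A} {D E S : A⟦X⟧}

theorem sub_rescale_neg_one_of_mul_eq (hE0 : E ≠ 0) (hE : rescale (-1) E = -E)
    (hS : rescale (-1) S = S) (h : D * E = X * (C a * S + C b * E)) :
    D - rescale (-1) D = C (2 * b) * X := by
  have h_neg := congrArg (rescale (-1 : A)) h
  simp only [map_mul, map_add, hE, hS, rescale_C, rescale_neg_one_X] at h_neg
  apply mul_right_cancel₀ hE0
  rw [map_mul, map_ofNat]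
  linear_combination h + h_neg

theorem X_mul_derivative_of_mul_eq (hE0 : E ≠ 0) (hE : d⁄dX A E = C a * S)
    (hS : d⁄dX A S = C a * E) (h : D * E = X * (C a * S + C b * E)) :
    X * d⁄dX A D = D - D ^ 2 + C (2 * b) * X * D + C (a ^ 2 - b ^ 2) * X ^ 2 := by
  have h_deriv := congrArg (d⁄dX A) h
  simp only [Derivation.leibniz, map_add, derivative_C, derivative_X, hE, hS, smul_eq_mul]
    at h_deriv
  apply mul_right_cancel₀ (pow_ne_zero 2 hE0)
  simp only [map_mul, map_sub, map_pow, map_ofNat]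
  -- `X·E` times the differentiated relation, with `D·E` eliminated by the relation itself
  linear_combination (X * E) * h_deriv + (D * E - E - C b * X * E) * h

end HyperbolicPair

section Exp

theorem rescale_neg_one_expS (a : R) : rescale (-1) (expS a) = expS (-a) := by
  ext n
  simp only [expS, coeff_rescale, coeff_mk, neg_pow a n]
  ring

theorem derivative_expS [CharZero R] (a : R) : d⁄dX R (expS a) = C a * expS a := by
  ext n
  simp only [expS, coeff_derivative, coeff_C_mul, coeff_mk, Nat.factorial_succ, Nat.cast_mul,
    Nat.cast_succ]
  field_simp
  ring

theorem expS_sub_expS_neg_ne_zero [CharZero R] {a : R} (ha : a ≠ 0) :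
    expS a - expS (-a) ≠ 0 := by
  intro h
  have h_coeff := congrArg (coeff 1) h
  simp only [expS, map_sub, coeff_mk, pow_one, Nat.factorial_one, Nat.cast_one, div_one,
    sub_neg_eq_add, map_zero] at h_coeff
  exact ha (by linear_combination h_coeff / 2)

end Exp

section Laurent

theorem coeff_coe_negSucc {A : Type*} [Semiring A] (g : A⟦X⟧) (n : ℕ) :
    (g : A⸨X⸩).coeff (Int.negSucc n) = 0 := by
  rw [coeff_coe, if_pos (Int.negSucc_lt_zero n)]

theorem zscale_coe (w : R) (g : R⟦X⟧) : zscale w (g : R⸨X⸩) = (rescale w g : R⸨X⸩) := by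
  ext (n | n)
  · simp [zscale, coeff_rescale]
  · simp [zscale, coeff_coe_negSucc]

theorem coeff_X_mul_derivative {A : Type*} [CommSemiring A] (g : A⟦X⟧) (n : ℕ) :
    coeff n (X * d⁄dX A g) = n * coeff n g := by
  rcases n with _ | n
  · simp
  · rw [coeff_succ_X_mul, coeff_derivative, mul_comm, Nat.cast_succ]

theorem coeff_coe_X_mul_derivative (g : R⟦X⟧) (m : ℤ) :
    ((X * d⁄dX R g : R⟦X⟧) : R⸨X⸩).coeff m = m * (g : R⸨X⸩).coeff m := by
  rcases m with n | n
  · simp only [Int.ofNat_eq_natCast, LaurentSeries.coeff_coe_powerSeries, coeff_X_mul_derivative,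
      Int.cast_natCast]
  · rw [coeff_coe_negSucc, coeff_coe_negSucc, mul_zero]

theorem zscale_neg_one_FH (g : R⟦X⟧) : zscale (-1) (FH g) = -FH (rescale (-1) g) := by
  ext k
  have h := congrArg (HahnSeries.coeff · (k + 1)) (zscale_coe (-1) g)
  simp only [zscale, FH, HahnSeries.coeff_single_mul, HahnSeries.coeff_neg, one_mul,
    sub_neg_eq_add] at h ⊢
  rw [← h, zpow_add_one₀ (neg_ne_zero.mpr one_ne_zero)]
  ring

theorem coe_X_mul_FH (g : R⟦X⟧) : ((X : R⟦X⟧) : R⸨X⸩) * FH g = g := by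
  rw [FH, ← mul_assoc, HahnSeries.ofPowerSeries_X, HahnSeries.single_mul_single]
  simp

theorem coe_X_mul_lderiv_FH (g : R⟦X⟧) :
    ((X : R⟦X⟧) : R⸨X⸩) * lderiv (FH g) = FH (X * d⁄dX R g - g) := by
  ext k
  simp only [lderiv, FH, HahnSeries.ofPowerSeries_X, HahnSeries.coeff_single_mul, map_sub,
    HahnSeries.coeff_sub, coeff_coe_X_mul_derivative, one_mul, sub_neg_eq_add, sub_add_cancel]
  push_cast
  ring

theorem coe_X_ne_zero : ((X : R⟦X⟧) : R⸨X⸩) ≠ 0 := by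
  simp [HahnSeries.ofPowerSeries_X]

end Laurent

section IsDab

variable {a b : R} {D : R⟦X⟧}

theorem IsDab.sub_rescale_neg_one [CharZero R] (h : IsDab a b D) :
    D - rescale (-1) D = C (2 * b) * X := by
  rcases h with ⟨ha, h⟩ | ⟨-, rfl⟩
  · refine sub_rescale_neg_one_of_mul_eq (expS_sub_expS_neg_ne_zero ha) ?_ ?_ h <;>
      simp only [map_add, map_sub, rescale_neg_one_expS, neg_neg] <;> ring
  · simp only [map_add, map_one, map_mul, rescale_C, rescale_neg_one_X, map_ofNat]
    ring

theorem IsDab.X_mul_derivative [CharZero R] (h : IsDab a b D) :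
    X * d⁄dX R D = D - D ^ 2 + C (2 * b) * X * D + C (a ^ 2 - b ^ 2) * X ^ 2 := by
  rcases h with ⟨ha, h⟩ | ⟨rfl, rfl⟩
  · refine X_mul_derivative_of_mul_eq (expS_sub_expS_neg_ne_zero ha) ?_ ?_ h <;>
      simp only [map_add, map_sub, derivative_expS, map_neg] <;> ring
  · simp only [map_add, Derivation.leibniz, derivative_one, derivative_C, derivative_X,
      smul_eq_mul, map_mul, map_sub, map_pow, map_ofNat, map_zero]
    ring

theorem IsDab.FH_add_zscale_neg_one_FH [CharZero R] (h : IsDab a b D) :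
    FH D + zscale (-1) (FH D) = HahnSeries.C (2 * b) := by
  have h_odd := congrArg (HahnSeries.ofPowerSeries ℤ R) h.sub_rescale_neg_one
  rw [map_sub, map_mul, HahnSeries.ofPowerSeries_C] at h_odd
  apply mul_left_cancel₀ coe_X_ne_zero
  rw [zscale_neg_one_FH]
  linear_combination coe_X_mul_FH D - coe_X_mul_FH (rescale (-1) D) + h_odd

theorem IsDab.lderiv_FH [CharZero R] (h : IsDab a b D) :
    lderiv (FH D) = -(FH D ^ 2) + HahnSeries.C (2 * b) * FH D + HahnSeries.C (a ^ 2 - b ^ 2) := by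
  apply mul_left_cancel₀ (pow_ne_zero 2 coe_X_ne_zero)
  rw [sq, mul_assoc, coe_X_mul_lderiv_FH, coe_X_mul_FH, h.X_mul_derivative]
  simp only [map_add, map_sub, map_mul, map_pow, HahnSeries.ofPowerSeries_C, ← coe_X_mul_FH D]
  ring

end IsDab

/-- for `a, b ∈ ℂ`, the Laurent series `F(t) = D_{a,b}(t)/t` satisfies
`F(t) + F(−t) = 2b` and the Riccati equation `F′ = −F² + 2b·F + (a² − b²)`. -/
theorem Dab_div_t_properties (a b : ℂ) (D : PowerSeries ℂ) (hD : IsDab a b D) :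
    FH D + zscale (-1 : ℂ) (FH D) = (HahnSeries.C (2 * b) : LaurentSeries ℂ) ∧
      lderiv (FH D)
        = -(FH D ^ 2) + (HahnSeries.C (2 * b) : LaurentSeries ℂ) * FH D
          + (HahnSeries.C (a ^ 2 - b ^ 2) : LaurentSeries ℂ) :=
  ⟨hD.FH_add_zscale_neg_one_FH, hD.lderiv_FH⟩

end RigidGenus
end
end
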